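/- Under margin assumption MA(1) with margin h ∈ (0,1), for every classifier f, Var[γ(f,(X,Y)) − γ(f*,(X,Y))] ≤ h⁻¹ · l(f*,f), where γ(f,(X,Y)) = 1[f(X)≠Y]; in particular, for every ε > 0 with l(f*,f) ≤ ε², the variance is at most ε²/h, i.e. condition (variance) of the hold-out theorem holds with w(ε) = ε/√h. -/
import Mathlib


open MeasureTheory
open scoped Classical

/-- Under margin assumption MA(1) with margin h ∈ (0,1),
for every classifier f, Var[γ(f,(X,Y)) − γ(f*,(X,Y))] ≤ h⁻¹ · l(f*,f). -/
theorem variance_le_margin_loss {Ω S : Type*} [MeasurableSpace Ω] [MeasurableSpace S]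
    (μ : Measure Ω) [IsProbabilityMeasure μ]
    (X : Ω → S) (Y : Ω → ℝ) (hX : Measurable X) (hY : Measurable Y)
    (hYval : ∀ ω, Y ω = 0 ∨ Y ω = 1)
    (η : S → ℝ) (hη : Measurable η)
    -- η(x) = P(Y = 1 | X = x) :
    (hcond : ∀ A : Set S, MeasurableSet A →
      ∫ ω in X ⁻¹' A, Y ω ∂μ = ∫ ω in X ⁻¹' A, η (X ω) ∂μ)
    -- f* is the Bayes classifier :
    (fstar : S → ℝ) (hfstar : fstar = fun x => if (1:ℝ)/2 ≤ η x then 1 else 0)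
    (h : ℝ) (hh0 : 0 < h) (hh1 : h < 1)
    -- MA(1): for every classifier g, l(f*,g) ≥ h·E[(g(X) − f*(X))²] :
    (hMA1 : ∀ g : S → ℝ, Measurable g → (∀ x, g x = 0 ∨ g x = 1) →
      (∫ ω, ((if g (X ω) ≠ Y ω then (1:ℝ) else 0)
              - (if fstar (X ω) ≠ Y ω then (1:ℝ) else 0)) ∂μ)
        ≥ h * ∫ ω, (g (X ω) - fstar (X ω)) ^ 2 ∂μ)
    (f : S → ℝ) (hf : Measurable f) (hfval : ∀ x, f x = 0 ∨ f x = 1) :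
    (∫ ω, ((if f (X ω) ≠ Y ω then (1:ℝ) else 0)
            - (if fstar (X ω) ≠ Y ω then (1:ℝ) else 0)) ^ 2 ∂μ)
      - (∫ ω, ((if f (X ω) ≠ Y ω then (1:ℝ) else 0)
            - (if fstar (X ω) ≠ Y ω then (1:ℝ) else 0)) ∂μ) ^ 2
      ≤ h⁻¹ * ∫ ω, ((if f (X ω) ≠ Y ω then (1:ℝ) else 0)
            - (if fstar (X ω) ≠ Y ω then (1:ℝ) else 0)) ∂μ := by

  have key : ∀ ω, ((if f (X ω) ≠ Y ω then (1:ℝ) else 0)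
            - (if fstar (X ω) ≠ Y ω then (1:ℝ) else 0)) ^ 2
      = (f (X ω) - fstar (X ω)) ^ 2 := by
    intro ω
    have hfs : fstar (X ω) = 0 ∨ fstar (X ω) = 1 := by
      subst hfstar; simp only; split <;> simp
    rcases hfval (X ω) with ha | ha <;> rcases hfs with hb | hb <;>
      rcases hYval ω with hy | hy <;>
      simp [ha, hb, hy] <;> norm_num
  have hge := hMA1 f hf hfval
  have heq : (∫ ω, ((if f (X ω) ≠ Y ω then (1:ℝ) else 0)
            - (if fstar (X ω) ≠ Y ω then (1:ℝ) else 0)) ^ 2 ∂μ)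
      = ∫ ω, (f (X ω) - fstar (X ω)) ^ 2 ∂μ := by
    exact integral_congr_ae (Filter.Eventually.of_forall key)
  set D := ∫ ω, ((if f (X ω) ≠ Y ω then (1:ℝ) else 0)
            - (if fstar (X ω) ≠ Y ω then (1:ℝ) else 0)) ∂μ with hD
  rw [heq]
  have hinv : 0 < h⁻¹ := inv_pos.mpr hh0
  have hI : ∫ ω, (f (X ω) - fstar (X ω)) ^ 2 ∂μ ≤ h⁻¹ * D := by
    rw [inv_mul_eq_div, le_div_iff₀ hh0, mul_comm]
    exact hge
  nlinarith [sq_nonneg D]
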